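/- Let (A,μ,α) be a Hom-alternative algebra. Then the Hom-Moufang identities hold for all x,y,z ∈ A: (1) ((xy)α(x))α²(z) = α²(x)(α(y)(xz)); (2) ((zx)α(y))α²(x) = α²(z)(α(x)(yx)); (3) α((xy)(zx)) = α²(x)((yz)α(x)). -/
import Mathlib


variable {K A : Type*} [Field K] [CharZero K] [AddCommGroup A] [Module K A]

/-- Hom-associator of a multiplication μ with twisting map α. -/
def homAs (μ : A →ₗ[K] A →ₗ[K] A) (α : A →ₗ[K] A) (x y z : A) : A :=
  μ (μ x y) (α z) - μ (α x) (μ y z)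

set_option maxHeartbeats 3200000 in
theorem stmt19 (μ : A →ₗ[K] A →ₗ[K] A) (α : A →ₗ[K] A)
    (hmult : ∀ x y : A, α (μ x y) = μ (α x) (α y))
    (h1 : ∀ x y : A, homAs μ α x x y = 0)
    (h2 : ∀ x y : A, homAs μ α x y y = 0)
    (h3 : ∀ x y : A, homAs μ α x y x = 0) :
    ∀ x y z : A,
      μ (μ (μ x y) (α x)) (α (α z)) = μ (α (α x)) (μ (α y) (μ x z)) ∧
      μ (μ (μ z x) (α y)) (α (α x)) = μ (α (α z)) (μ (α x) (μ y x)) ∧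
      α (μ (μ x y) (μ z x)) = μ (α (α x)) (μ (μ y z) (α x)) := by
  intro x y z
  have alt12 : ∀ u v w : A, homAs μ α u v w + homAs μ α v u w = 0 := by
    intro u v w
    have e2 : homAs μ α u v w + homAs μ α v u w =
        homAs μ α (u + v) (u + v) w - homAs μ α u u w - homAs μ α v v w := by
      simp only [homAs, map_add, LinearMap.add_apply]
      abel
    rw [h1, h1, h1] at e2
    simpa using e2
  have alt23 : ∀ u v w : A, homAs μ α u v w + homAs μ α u w v = 0 := by
    intro u v w
    have e2 : homAs μ α u v w + homAs μ α u w v =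
        homAs μ α u (v + w) (v + w) - homAs μ α u v v - homAs μ α u w w := by
      simp only [homAs, map_add, LinearMap.add_apply]
      abel
    rw [h2, h2, h2] at e2
    simpa using e2
  refine ⟨?_, ?_, ?_⟩
  · -- g1
    have g1e0 : (homAs μ α (μ x x) (α y) (α z) + homAs μ α (μ x x) (α z) (α y)) = 0 := alt23 (μ x x) (α y) (α z)
    have g1e1 : (homAs μ α (α x) (μ x y) (α z) + homAs μ α (μ x y) (α x) (α z)) = 0 := alt12 (α x) (μ x y) (α z)
    have g1e2 : (homAs μ α (α x) (α y) (μ x z) + homAs μ α (α x) (μ x z) (α y)) = 0 := alt23 (α x) (α y) (μ x z)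
    have g1e3 : (homAs μ α (α x) (α x) (μ y z) + homAs μ α (α x) (μ y z) (α x)) = 0 := alt23 (α x) (α x) (μ y z)
    have g1e4 : (homAs μ α (α x) (μ y z) (α x) + homAs μ α (μ y z) (α x) (α x)) = 0 := alt12 (α x) (μ y z) (α x)
    have g1e5 : (homAs μ α (μ y z) (α x) (α x) + homAs μ α (μ y z) (α x) (α x)) = 0 := alt23 (μ y z) (α x) (α x)
    have g1e6 : (homAs μ α (α x) (α x) (μ z y) + homAs μ α (α x) (α x) (μ z y)) = 0 := alt12 (α x) (α x) (μ z y)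
    have g1e7 : (μ (α (α x)) (homAs μ α x y z + homAs μ α x z y)) = 0 := by rw [alt23 x y z, map_zero]
    have g1e8 : (μ (homAs μ α x x z + homAs μ α x x z) (α (α y))) = 0 := by rw [alt12 x x z, map_zero, LinearMap.zero_apply]
    have g1e9 : (μ (homAs μ α x x y + homAs μ α x x y) (α (α z))) = 0 := by rw [alt12 x x y, map_zero, LinearMap.zero_apply]
    have k1 : (μ (μ (μ x y) (α x)) (α (α z))) + (μ (μ (μ x y) (α x)) (α (α z))) = ((μ (α (α x)) (μ (α y) (μ x z))) + (μ (α (α x)) (μ (α y) (μ x z))) - (homAs μ α (μ x x) (α y) (α z) + homAs μ α (μ x x) (α z) (α y)) - (homAs μ α (μ x x) (α y) (α z) + homAs μ α (μ x x) (α z) (α y)) + (homAs μ α (α x) (μ x y) (α z) + homAs μ α (μ x y) (α x) (α z)) + (homAs μ α (α x) (μ x y) (α z) + homAs μ α (μ x y) (α x) (α z)) + (homAs μ α (α x) (α y) (μ x z) + homAs μ α (α x) (μ x z) (α y)) + (homAs μ α (α x) (α y) (μ x z) + homAs μ α (α x) (μ x z) (α y)) - (homAs μ α (α x) (α x) (μ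 y z) + homAs μ α (α x) (μ y z) (α x)) - (homAs μ α (α x) (α x) (μ y z) + homAs μ α (α x) (μ y z) (α x)) + (homAs μ α (α x) (μ y z) (α x) + homAs μ α (μ y z) (α x) (α x)) + (homAs μ α (α x) (μ y z) (α x) + homAs μ α (μ y z) (α x) (α x)) - (homAs μ α (μ y z) (α x) (α x) + homAs μ α (μ y z) (α x) (α x)) - (homAs μ α (α x) (α x) (μ z y) + homAs μ α (α x) (α x) (μ z y)) + (μ (α (α x)) (homAs μ α x y z + homAs μ α x z y)) + (μ (α (α x)) (homAs μ α x y z + homAs μ α x z y)) + (μ (homAs μ α x x z + homAs μ α x x z) (α (α y))) + (μ (homAs μ α x x y + homAs μ α x x y) (α (α z)))) := by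
      simp only [homAs, hmult, map_add, map_sub, LinearMap.add_apply, LinearMap.sub_apply]
      abel
    rw [g1e0, g1e1, g1e2, g1e3, g1e4, g1e5, g1e6, g1e7, g1e8, g1e9] at k1
    have k2 : (2:K) • (μ (μ (μ x y) (α x)) (α (α z))) = (2:K) • (μ (α (α x)) (μ (α y) (μ x z))) := by
      rw [two_smul, two_smul]
      rw [k1]; abel
    exact smul_right_injective A (by norm_num : (2:K) ≠ 0) k2
  · -- g2
    have g2e0 : (homAs μ α (μ x x) (α y) (α z) + homAs μ α (μ x x) (α z) (α y)) = 0 := alt23 (μ x x) (α y) (α z)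
    have g2e1 : (homAs μ α (α x) (α z) (μ x y) + homAs μ α (α z) (α x) (μ x y)) = 0 := alt12 (α x) (α z) (μ x y)
    have g2e2 : (homAs μ α (α x) (α z) (μ x y) + homAs μ α (α x) (μ x y) (α z)) = 0 := alt23 (α x) (α z) (μ x y)
    have g2e3 : (homAs μ α (α z) (α x) (μ x y) + homAs μ α (α z) (μ x y) (α x)) = 0 := alt23 (α z) (α x) (μ x y)
    have g2e4 : (homAs μ α (α z) (μ x y) (α x) + homAs μ α (μ x y) (α z) (α x)) = 0 := alt12 (α z) (μ x y) (α x)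
    have g2e5 : (homAs μ α (α x) (μ x z) (α y) + homAs μ α (μ x z) (α x) (α y)) = 0 := alt12 (α x) (μ x z) (α y)
    have g2e6 : (homAs μ α (μ x z) (α x) (α y) + homAs μ α (μ x z) (α y) (α x)) = 0 := alt23 (μ x z) (α x) (α y)
    have g2e7 : (homAs μ α (α x) (α z) (μ y x) + homAs μ α (α z) (α x) (μ y x)) = 0 := alt12 (α x) (α z) (μ y x)
    have g2e8 : (homAs μ α (α x) (α x) (μ y z) + homAs μ α (α x) (μ y z) (α x)) = 0 := alt23 (α x) (α x) (μ y z)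
    have g2e9 : (homAs μ α (α x) (μ y z) (α x) + homAs μ α (μ y z) (α x) (α x)) = 0 := alt12 (α x) (μ y z) (α x)
    have g2e10 : (homAs μ α (μ y z) (α x) (α x) + homAs μ α (μ y z) (α x) (α x)) = 0 := alt23 (μ y z) (α x) (α x)
    have g2e11 : (homAs μ α (α x) (α y) (μ z x) + homAs μ α (α y) (α x) (μ z x)) = 0 := alt12 (α x) (α y) (μ z x)
    have g2e12 : (homAs μ α (α y) (α x) (μ z x) + homAs μ α (α y) (μ z x) (α x)) = 0 := alt23 (α y) (α x) (μ z x)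
    have g2e13 : (homAs μ α (α y) (μ z x) (α x) + homAs μ α (μ z x) (α y) (α x)) = 0 := alt12 (α y) (μ z x) (α x)
    have g2e14 : (homAs μ α (α x) (α x) (μ z y) + homAs μ α (α x) (α x) (μ z y)) = 0 := alt12 (α x) (α x) (μ z y)
    have g2e15 : (homAs μ α (α x) (α x) (μ z y) + homAs μ α (α x) (μ z y) (α x)) = 0 := alt23 (α x) (α x) (μ z y)
    have g2e16 : (μ (α (α x)) (homAs μ α x y z + homAs μ α x z y)) = 0 := by rw [alt23 x y z, map_zero]
    have g2e17 : (μ (homAs μ α x y z + homAs μ α x z y) (α (α x))) = 0 := by rw [alt23 x y z, map_zero, LinearMap.zero_apply]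
    have g2e18 : (μ (α (α x)) (homAs μ α y z x + homAs μ α z y x)) = 0 := by rw [alt12 y z x, map_zero]
    have g2e19 : (μ (homAs μ α x x z + homAs μ α x x z) (α (α y))) = 0 := by rw [alt12 x x z, map_zero, LinearMap.zero_apply]
    have g2e20 : (μ (homAs μ α x x y + homAs μ α x x y) (α (α z))) = 0 := by rw [alt12 x x y, map_zero, LinearMap.zero_apply]
    have k1 : (μ (μ (μ z x) (α y)) (α (α x))) + (μ (μ (μ z x) (α y)) (α (α x))) = ((μ (α (α z)) (μ (α x) (μ y x))) + (μ (α (α z)) (μ (α x) (μ y x))) + (homAs μ α (μ x x) (α y) (α z) + homAs μ α (μ x x) (α z) (α y)) + (homAs μ α (μ x x) (α y) (α z) + homAs μ α (μ x x) (α z) (α y)) + (homAs μ α (α x) (α z) (μ x y) + homAs μ α (α z) (α x) (μ x y)) + (homAs μ α (α x) (α z) (μ x y) + homAs μ α (α z) (α x) (μ x y)) - (homAs μ α (α x) (α z) (μ x y) + homAs μ α (α x) (μ x y) (α z)) - (homAs μ α (α x) (α z) (μ x y) + homAs μ α (α x) (μ x y) (α z)) - (homAs μ α (α z) (α x) (μ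 x y) + homAs μ α (α z) (μ x y) (α x)) - (homAs μ α (α z) (α x) (μ x y) + homAs μ α (α z) (μ x y) (α x)) + (homAs μ α (α z) (μ x y) (α x) + homAs μ α (μ x y) (α z) (α x)) + (homAs μ α (α z) (μ x y) (α x) + homAs μ α (μ x y) (α z) (α x)) - (homAs μ α (α x) (μ x z) (α y) + homAs μ α (μ x z) (α x) (α y)) - (homAs μ α (α x) (μ x z) (α y) + homAs μ α (μ x z) (α x) (α y)) + (homAs μ α (μ x z) (α x) (α y) + homAs μ α (μ x z) (α y) (α x)) + (homAs μ α (μ x z) (α x) (α y) + homAs μ α (μ x z) (α y) (α x)) + (homAs μ α (α x) (α z) (μ y x) + homAs μ α (α z) (α x) (μ y x)) + (homAs μ α (α x) (α z) (μ y x) + homAs μ α (α z) (α x) (μ y x)) + (homAs μ α (α x) (α x) (μ y z) + homAs μ α (α x) (μ y z) (α x)) + (homAs μ α (α x) (α x) (μ y z) + homAs μ α (α x) (μ y z) (α x)) - (homAs μ α (α x) (μ y z) (α x) + homAs μ α (μ y z) (α x) (α x)) - (homAs μ α (α x) (μ y z) (α x) + homAs μ α (μ y z) (α x) (α x)) - (homAs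 μ α (α x) (μ y z) (α x) + homAs μ α (μ y z) (α x) (α x)) - (homAs μ α (α x) (μ y z) (α x) + homAs μ α (μ y z) (α x) (α x)) + (homAs μ α (μ y z) (α x) (α x) + homAs μ α (μ y z) (α x) (α x)) + (homAs μ α (μ y z) (α x) (α x) + homAs μ α (μ y z) (α x) (α x)) + (homAs μ α (α x) (α y) (μ z x) + homAs μ α (α y) (α x) (μ z x)) + (homAs μ α (α x) (α y) (μ z x) + homAs μ α (α y) (α x) (μ z x)) - (homAs μ α (α y) (α x) (μ z x) + homAs μ α (α y) (μ z x) (α x)) - (homAs μ α (α y) (α x) (μ z x) + homAs μ α (α y) (μ z x) (α x)) + (homAs μ α (α y) (μ z x) (α x) + homAs μ α (μ z x) (α y) (α x)) + (homAs μ α (α y) (μ z x) (α x) + homAs μ α (μ z x) (α y) (α x)) + (homAs μ α (α x) (α x) (μ z y) + homAs μ α (α x) (α x) (μ z y)) + (homAs μ α (α x) (α x) (μ z y) + homAs μ α (α x) (α x) (μ z y)) - (homAs μ α (α x) (α x) (μ z y) + homAs μ α (α x) (μ z y) (α x)) - (homAs μ α (α x) (α x) (μ z y) + homAs μ α (α x)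 (μ z y) (α x)) - (μ (α (α x)) (homAs μ α x y z + homAs μ α x z y)) - (μ (α (α x)) (homAs μ α x y z + homAs μ α x z y)) - (μ (homAs μ α x y z + homAs μ α x z y) (α (α x))) - (μ (homAs μ α x y z + homAs μ α x z y) (α (α x))) - (μ (α (α x)) (homAs μ α y z x + homAs μ α z y x)) - (μ (α (α x)) (homAs μ α y z x + homAs μ α z y x)) - (μ (homAs μ α x x z + homAs μ α x x z) (α (α y))) - (μ (homAs μ α x x y + homAs μ α x x y) (α (α z)))) := by
      simp only [homAs, hmult, map_add, map_sub, LinearMap.add_apply, LinearMap.sub_apply]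
      abel
    rw [g2e0, g2e1, g2e2, g2e3, g2e4, g2e5, g2e6, g2e7, g2e8, g2e9, g2e10, g2e11, g2e12, g2e13, g2e14, g2e15, g2e16, g2e17, g2e18, g2e19, g2e20] at k1
    have k2 : (2:K) • (μ (μ (μ z x) (α y)) (α (α x))) = (2:K) • (μ (α (α z)) (μ (α x) (μ y x))) := by
      rw [two_smul, two_smul]
      rw [k1]; abel
    exact smul_right_injective A (by norm_num : (2:K) ≠ 0) k2
  · -- g3
    have g3e0 : (homAs μ α (μ x x) (α y) (α z) + homAs μ α (μ x x) (α z) (α y)) = 0 := alt23 (μ x x) (α y) (α z)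
    have g3e1 : (homAs μ α (α x) (α z) (μ x y) + homAs μ α (α x) (μ x y) (α z)) = 0 := alt23 (α x) (α z) (μ x y)
    have g3e2 : (homAs μ α (α x) (μ x z) (α y) + homAs μ α (μ x z) (α x) (α y)) = 0 := alt12 (α x) (μ x z) (α y)
    have g3e3 : (homAs μ α (α x) (α x) (μ y z) + homAs μ α (α x) (μ y z) (α x)) = 0 := alt23 (α x) (α x) (μ y z)
    have g3e4 : (homAs μ α (α x) (μ y z) (α x) + homAs μ α (μ y z) (α x) (α x)) = 0 := alt12 (α x) (μ y z) (α x)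
    have g3e5 : (homAs μ α (μ y z) (α x) (α x) + homAs μ α (μ y z) (α x) (α x)) = 0 := alt23 (μ y z) (α x) (α x)
    have g3e6 : (homAs μ α (α x) (α y) (μ z x) + homAs μ α (α x) (μ z x) (α y)) = 0 := alt23 (α x) (α y) (μ z x)
    have g3e7 : (homAs μ α (α x) (α x) (μ z y) + homAs μ α (α x) (α x) (μ z y)) = 0 := alt12 (α x) (α x) (μ z y)
    have g3e8 : (μ (α (α x)) (homAs μ α x y z + homAs μ α y x z)) = 0 := by rw [alt12 x y z, map_zero]
    have g3e9 : (μ (α (α x)) (homAs μ α x y z + homAs μ α x z y)) = 0 := by rw [alt23 x y z, map_zero]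
    have g3e10 : (μ (α (α x)) (homAs μ α x z y + homAs μ α z x y)) = 0 := by rw [alt12 x z y, map_zero]
    have g3e11 : (μ (α (α x)) (homAs μ α y x z + homAs μ α y z x)) = 0 := by rw [alt23 y x z, map_zero]
    have g3e12 : (μ (homAs μ α x x z + homAs μ α x x z) (α (α y))) = 0 := by rw [alt12 x x z, map_zero, LinearMap.zero_apply]
    have g3e13 : (μ (homAs μ α x x z + homAs μ α x z x) (α (α y))) = 0 := by rw [alt23 x x z, map_zero, LinearMap.zero_apply]
    have g3e14 : (μ (homAs μ α x x y + homAs μ α x x y) (α (α z))) = 0 := by rw [alt12 x x y, map_zero, LinearMap.zero_apply]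
    have k1 : (α (μ (μ x y) (μ z x))) + (α (μ (μ x y) (μ z x))) = ((μ (α (α x)) (μ (μ y z) (α x))) + (μ (α (α x)) (μ (μ y z) (α x))) + (homAs μ α (μ x x) (α y) (α z) + homAs μ α (μ x x) (α z) (α y)) + (homAs μ α (μ x x) (α y) (α z) + homAs μ α (μ x x) (α z) (α y)) - (homAs μ α (α x) (α z) (μ x y) + homAs μ α (α x) (μ x y) (α z)) - (homAs μ α (α x) (α z) (μ x y) + homAs μ α (α x) (μ x y) (α z)) - (homAs μ α (α x) (μ x z) (α y) + homAs μ α (μ x z) (α x) (α y)) - (homAs μ α (α x) (μ x z) (α y) + homAs μ α (μ x z) (α x) (α y)) + (homAs μ α (α x) (α x) (μ y z) + homAs μ α (α x) (μ y z) (α x)) + (homAs μ α (α x) (α x) (μ y z) + homAs μ α (α x) (μ y z) (α x)) - (homAs μ α (α x) (μ y z) (α x) + homAs μ α (μ y z) (α x) (α x)) - (homAs μ α (α x) (μ y z) (α x) + homAs μ α (μ y z) (α x) (α x)) + (homAs μ α (μ y z) (α x) (α x) + homAs μ α (μ y z) (α x) (α x)) + (homAs μ α (α x) (α y) (μ z x)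 + homAs μ α (α x) (μ z x) (α y)) + (homAs μ α (α x) (α y) (μ z x) + homAs μ α (α x) (μ z x) (α y)) + (homAs μ α (α x) (α x) (μ z y) + homAs μ α (α x) (α x) (μ z y)) + (μ (α (α x)) (homAs μ α x y z + homAs μ α y x z)) + (μ (α (α x)) (homAs μ α x y z + homAs μ α y x z)) - (μ (α (α x)) (homAs μ α x y z + homAs μ α x z y)) - (μ (α (α x)) (homAs μ α x y z + homAs μ α x z y)) - (μ (α (α x)) (homAs μ α x y z + homAs μ α x z y)) - (μ (α (α x)) (homAs μ α x y z + homAs μ α x z y)) + (μ (α (α x)) (homAs μ α x z y + homAs μ α z x y)) + (μ (α (α x)) (homAs μ α x z y + homAs μ α z x y)) - (μ (α (α x)) (homAs μ α y x z + homAs μ α y z x)) - (μ (α (α x)) (homAs μ α y x z + homAs μ α y z x)) - (μ (homAs μ α x x z + homAs μ α x x z) (α (α y))) - (μ (homAs μ α x x z + homAs μ α x x z) (α (α y))) + (μ (homAs μ α x x z + homAs μ α x z x) (α (α y))) + (μ (homAs μ α x x z + homAs μ α x z x) (α (α y))) - (μ (homAs μ α x x y + homAs μ α x x y) (α (α z))))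 := by
      simp only [homAs, hmult, map_add, map_sub, LinearMap.add_apply, LinearMap.sub_apply]
      abel
    rw [g3e0, g3e1, g3e2, g3e3, g3e4, g3e5, g3e6, g3e7, g3e8, g3e9, g3e10, g3e11, g3e12, g3e13, g3e14] at k1
    have k2 : (2:K) • (α (μ (μ x y) (μ z x))) = (2:K) • (μ (α (α x)) (μ (μ y z) (α x))) := by
      rw [two_smul, two_smul]
      rw [k1]; abel
    exact smul_right_injective A (by norm_num : (2:K) ≠ 0) k2
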